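/- Let μ and σ be real numbers with μ < 1/2 and σ > 0, and set x = 2σ²/(1 − 2μ) and m = (1/2)·(1 + x − √(1 + x²)). Then m satisfies the moment-matching identity m·(1 − m) = (1 − 2m)·σ²/(1 − 2μ); equivalently, m(1 − m)/(1 − 2m) = σ²/(1 − 2μ). -/
import Mathlib

/-- Algebraic core of Theorem 1: with `μ < 1/2`, `σ > 0`,
`x = 2σ²/(1 − 2μ)` and `m = (1/2)·(1 + x − √(1 + x²))`,
the moment-matching identity `m·(1 − m) = (1 − 2m)·σ²/(1 − 2μ)` holds. -/
theorem gaussian_proxy_moment_matching (μ σ : ℝ) (hμ : μ < 1 / 2) (hσ : 0 < σ)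
    (x m : ℝ) (hx : x = 2 * σ ^ 2 / (1 - 2 * μ))
    (hm : m = (1 / 2) * (1 + x - Real.sqrt (1 + x ^ 2))) :
    m * (1 - m) = (1 - 2 * m) * σ ^ 2 / (1 - 2 * μ) := by
  have h1 : (0:ℝ) < 1 - 2 * μ := by linarith
  have hs : Real.sqrt (1 + x ^ 2) ^ 2 = 1 + x ^ 2 := Real.sq_sqrt (by positivity)
  have hx2 : (1 - 2 * m) * σ ^ 2 / (1 - 2 * μ) = (1 - 2 * m) * x / 2 := by
    rw [hx]; field_simp
  rw [hx2]
  subst hm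
  linear_combination (-(1:ℝ)/4) * hs
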